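/- arXiv:2304.10803 — 2 statements merged into one kernel-verified Lean document; each statement's English description precedes it below -/
import Mathlib

section
/- For holomorphic (or formal power series / polynomial) functions f1, f2, f3 and any weights λ1, λ2, λ3, the first Rankin–Cohen bracket satisfies the Jacobi-type identity [[f1,f2]_1, f3]_1 + [[f2,f3]_1, f1]_1 + [[f3,f1]_1, f2]_1 = 0, where each bracket [fi,fj]_1 uses the weights λi, λj and the outer brackets use weights λi+λj+2 and the remaining weight. -/
/-!
In degree one the bracket is `[f, g]₁ = λ₁ f g' - λ₂ f' g`. Expanding the nested brackets with
the Leibniz rule turns the cyclic sum into a polynomial expression in the `fᵢ`, `fᵢ'`, `fᵢ''`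
and `λᵢ` that vanishes identically.
-/

open Polynomial Finset

/-- Generalized binomial coefficient `C(a, m) = (a-m+1)_m / m!`. -/
noncomputable def gbinom (a : ℂ) (m : ℕ) : ℂ :=
  (ascPochhammer ℂ m).eval (a - m + 1) / m.factorial

/-- The Rankin–Cohen bracket of weights `l1, l2` and degree `n`, on polynomials. -/
noncomputable def RC (l1 l2 : ℂ) (n : ℕ) (f g : Polynomial ℂ) : Polynomial ℂ :=
  ∑ s ∈ Finset.range (n + 1),
    ((-1 : ℂ) ^ s * gbinom (l1 + n - 1) (n - s) * gbinom (l2 + n - 1) s) •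
      (derivative^[s] f * derivative^[n - s] g)

lemma gbinom_zero (a : ℂ) : gbinom a 0 = 1 := by simp [gbinom]

lemma gbinom_one (a : ℂ) : gbinom a 1 = a := by simp [gbinom, ascPochhammer]

lemma RC_one (l1 l2 : ℂ) (f g : Polynomial ℂ) :
    RC l1 l2 1 f g = C l1 * (f * derivative g) - C l2 * (derivative f * g) := by
  simp only [RC, sum_range_succ, range_one, sum_singleton, pow_zero, pow_one, tsub_zero, tsub_self,
    Nat.cast_one, add_sub_cancel_right, gbinom_zero, gbinom_one, Function.iterate_zero,
    Function.iterate_one, id_eq, smul_eq_C_mul, map_mul, map_neg, map_one]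
  ring

theorem rc_jacobi_identity (l1 l2 l3 : ℂ) (f1 f2 f3 : Polynomial ℂ) :
    RC (l1 + l2 + 2) l3 1 (RC l1 l2 1 f1 f2) f3
      + RC (l2 + l3 + 2) l1 1 (RC l2 l3 1 f2 f3) f1
      + RC (l3 + l1 + 2) l2 1 (RC l3 l1 1 f3 f1) f2 = 0 := by
  simp only [RC_one, derivative_sub, derivative_mul, derivative_C, C_add, C_ofNat]
  ring
end

section
/- The generating function identity Σ_{k=0}^n U^{λ1,λ2;k}_{λ3;n,p} t^k = [(λ3)_n (λ1+λ2+λ3+n-1)_p / ((λ3)_p (λ2+λ3+p-1)_p (λ2+λ3+2p)_{n-p})] · ₂F₁(-p, λ1+n-p; λ1+λ2+λ3+n-1; t) · ₂F₁(p-n, p+λ2; -λ3-n+1; t) holds for all p ∈ {0,...,n} (both hypergeometric factors are polynomials in t). -/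
open Finset

/-- Rising Pochhammer symbol `(x)_m`. -/
noncomputable def poch (x : ℂ) (m : ℕ) : ℂ := (ascPochhammer ℂ m).eval x

/-- Racah polynomial value
`R_{p,k} = ₄F₃(-p, p+λ2+λ3-1, -k, k+λ1+λ2-1; λ2, λ1+λ2+λ3+n-1, -n; 1)`,
a terminating sum. -/
noncomputable def Racah (l1 l2 l3 : ℂ) (n p k : ℕ) : ℂ :=
  ∑ j ∈ Finset.range (min p k + 1),
    poch (-(p : ℂ)) j * poch ((p : ℂ) + l2 + l3 - 1) j * poch (-(k : ℂ)) j *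
        poch ((k : ℂ) + l1 + l2 - 1) j /
      (poch l2 j * poch (l1 + l2 + l3 + (n : ℂ) - 1) j * poch (-(n : ℂ)) j *
        (j.factorial : ℂ))

/-- The coefficient `U^{λ1,λ2;k}_{λ3;n,p}`. -/
noncomputable def Ucoef (l1 l2 l3 : ℂ) (n p k : ℕ) : ℂ :=
  (n.choose k : ℂ) *
      (poch l2 k * poch l3 (n - k) * poch (l1 + l2 + l3 + (n : ℂ) - 1) p /
        (poch l3 p * poch (l2 + l3 + (p : ℂ) - 1) p * poch (l2 + l3 + 2 * (p : ℂ)) (n - p))) *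
    Racah l1 l2 l3 n p k

/-- Terminating Gauss hypergeometric polynomial `₂F₁(-m, b; c; t)`. -/
noncomputable def F21 (m : ℕ) (b c t : ℂ) : ℂ :=
  ∑ j ∈ Finset.range (m + 1),
    poch (-(m : ℂ)) j * poch b j / (poch c j * (j.factorial : ℂ)) * t ^ j

/-!
Comparing coefficients of `t ^ k`, and noting that `Ucoef` is `C(n,k) (λ2)_k (λ3)_{n-k} R_{p,k}`
times a factor independent of `k`, the identity says that this product is `(λ3)_n` times the
Cauchy convolution of the coefficients of the two ₂F₁ polynomials. After multiplying by
`(λ1+λ2+λ3+n-1)_k`, both sides are terminating sums. Expanding the factor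
`(p+λ2+λ3-1)_j (k+λ1+λ2-1)_j` of the Racah sum by the Pfaff–Saalschütz identity and exchanging
the two summations, the inner sum is again a balanced terminating ₃F₂ at `1`, and its Saalschütz
closed form is exactly the corresponding term of the convolution.
-/

open Nat

lemma poch_zero (x : ℂ) : poch x 0 = 1 := by simp [poch]

lemma poch_succ (x : ℂ) (m : ℕ) : poch x (m + 1) = poch x m * (x + m) := by
  simp [poch, ascPochhammer_succ_eval]

lemma poch_one (x : ℂ) : poch x 1 = x := by simp [poch]

lemma poch_succ_left (x : ℂ) (m : ℕ) : poch x (m + 1) = x * poch (x + 1) m := by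
  simp [poch, ascPochhammer_succ_left]

lemma poch_add (x : ℂ) (m r : ℕ) : poch x (m + r) = poch x m * poch (x + m) r := by
  simp [poch, ← ascPochhammer_mul]

lemma poch_add_ne_zero_iff {x : ℂ} {m r : ℕ} :
    poch x (m + r) ≠ 0 ↔ poch x m ≠ 0 ∧ poch (x + m) r ≠ 0 := by
  rw [poch_add, mul_ne_zero_iff]

lemma poch_ne_zero {x : ℂ} {m : ℕ} (h : ∀ k < m, x + k ≠ 0) : poch x m ≠ 0 := by
  rw [poch, Ne, ascPochhammer_eval_eq_zero_iff]
  rintro ⟨k, hk, hkx⟩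
  exact h k hk (by rw [hkx]; ring)

lemma poch_ofReal_ne_zero {x : ℝ} {m : ℕ} (h : ∀ k < m, x + k ≠ 0) : poch (x : ℂ) m ≠ 0 :=
  poch_ne_zero fun k hk hx => h k hk (by exact_mod_cast hx)

lemma poch_neg_natCast (M j : ℕ) : poch (-M) j = (-1) ^ j * j ! * M.choose j := by
  rw [poch, ascPochhammer_eval_neg_eq_descPochhammer, descPochhammer_eval_eq_descFactorial,
    Nat.descFactorial_eq_factorial_mul_choose]
  push_cast
  ring

lemma poch_natCast_sub_add_one (M m : ℕ) : poch ((M : ℂ) - m + 1) m = m ! * M.choose m := by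
  rw [poch, ← descPochhammer_eval_eq_ascPochhammer, descPochhammer_eval_eq_descFactorial,
    Nat.descFactorial_eq_factorial_mul_choose]
  push_cast
  ring

lemma poch_one_sub (y : ℂ) (m : ℕ) : poch (1 - y) m = (-1) ^ m * poch (y - m) m := by
  rw [show 1 - y = -(y - 1) by ring, poch, ascPochhammer_eval_neg_eq_descPochhammer,
    descPochhammer_eval_eq_ascPochhammer, poch]
  ring_nf

section Saalschutz

variable (a b c : ℂ)

noncomputable def saalschutzTerm (m s : ℕ) : ℂ :=
  m.choose s * poch a s * poch b s * poch (c + s) (m - s) * poch (c - a - b) (m - s)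

/-- Wilf–Zeilberger certificate for `saalschutzTerm` in the variable `m`. -/
noncomputable def saalschutzCert (m : ℕ) : ℕ → ℂ
  | 0 => 0
  | s + 1 => -(m.choose s * poch a (s + 1) * poch b (s + 1) * poch (c + s) (m + 1 - s) *
      poch (c - a - b) (m - s))

lemma saalschutzTerm_wz {m s : ℕ} (hs : s ≤ m + 1) :
    (c + m) * (saalschutzTerm a b c (m + 1) s
        - (c - a + m) * (c - b + m) * saalschutzTerm a b c m s)
      = saalschutzCert a b c m (s + 1) - saalschutzCert a b c m s := by
  rcases s with _ | s
  · simp only [saalschutzTerm, saalschutzCert, Nat.choose_zero_right, Nat.cast_one,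
      Nat.cast_zero, add_zero, zero_add, Nat.sub_zero, poch_zero, poch_one, poch_succ _ m]
    ring
  obtain ⟨d, rfl⟩ | rfl : (∃ d, m = s + 1 + d) ∨ s = m :=
    (Nat.lt_or_eq_of_le (Nat.le_of_succ_le_succ hs)).imp (fun h => ⟨m - (s + 1), by omega⟩) id
  · have hpascal := Nat.choose_succ_succ (s + 1 + d) s
    have hshift := Nat.choose_succ_right_eq (s + 1 + d) s
    rw [show s + 1 + d - s = d + 1 by omega] at hshift
    simp only [saalschutzTerm, saalschutzCert, show s + 1 + d + 1 - (s + 1) = d + 1 by omega,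
      show s + 1 + d - (s + 1) = d by omega, show s + 1 + d + 1 - s = d + 2 by omega,
      show s + 1 + d - s = d + 1 by omega, poch_succ _ (s + 1), poch_succ _ d,
      poch_succ_left (c + s) (d + 1), hpascal]
    have hc : c + ((s + 1 : ℕ) : ℂ) = c + s + 1 := by push_cast; ring
    rw [hc]
    have hshift' : ((s + 1 + d).choose (s + 1) : ℂ) * (s + 1) = (s + 1 + d).choose s * (d + 1) := by
      exact_mod_cast hshift
    push_cast
    linear_combination (-(c + s + 1 + d) * poch a (s + 1) * poch b (s + 1) *
      poch (c + s + 1) d * poch (c - a - b) d * (c - a - b + d)) * hshift'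
  · simp only [saalschutzTerm, saalschutzCert, Nat.choose_succ_self, Nat.cast_zero,
      Nat.choose_self, Nat.cast_one, Nat.sub_self, poch_zero, Nat.add_sub_cancel_left,
      poch_one]
    push_cast
    ring

/-- The Pfaff–Saalschütz identity
`₃F₂(-m, a, b; c, 1 + a + b - c - m; 1) = (c - a)_m (c - b)_m / ((c)_m (c - a - b)_m)`,
with the denominators cleared. -/
theorem saalschutz {m : ℕ} (hc : poch c m ≠ 0) :
    ∑ s ∈ range (m + 1), saalschutzTerm a b c m s = poch (c - a) m * poch (c - b) m := by
  induction m with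
  | zero => simp [saalschutzTerm, poch_zero]
  | succ m ih =>
    obtain ⟨hcm, hcm'⟩ := poch_add_ne_zero_iff.mp hc
    rw [poch_one] at hcm'
    have htel : ∑ s ∈ range (m + 2), (c + m) * (saalschutzTerm a b c (m + 1) s
        - (c - a + m) * (c - b + m) * saalschutzTerm a b c m s) = 0 := by
      rw [sum_congr rfl fun s hs => saalschutzTerm_wz a b c (by simpa [Nat.lt_succ_iff] using hs),
        sum_range_sub]
      simp [saalschutzCert, Nat.choose_succ_self]
    rw [← mul_sum] at htel
    have hrec := (mul_eq_zero.mp htel).resolve_left hcm'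
    rw [sum_sub_distrib, ← mul_sum, sum_range_succ (saalschutzTerm a b c m) (m + 1),
      sub_eq_zero] at hrec
    rw [hrec, ih hcm, poch_succ (c - a), poch_succ (c - b)]
    simp [saalschutzTerm, Nat.choose_succ_self]
    ring

end Saalschutz

theorem saalschutz_choose (c : ℂ) {P N m : ℕ} (hPN : P ≤ N) (hmN : m ≤ N) (hc : poch c m ≠ 0) :
    ∑ r ∈ range (m + 1), (-1) ^ r * P.choose r * (N - r).choose (m - r) *
        poch (c + r) (m - r) * poch (c + P + m - N - 1) r
      = (N - P).choose m * poch (c + P) m := by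
  have hterm : ∀ r ∈ range (m + 1), saalschutzTerm (-P) (c + P + m - N - 1) c m r
      = m ! * ((-1) ^ r * P.choose r * (N - r).choose (m - r) *
        poch (c + r) (m - r) * poch (c + P + m - N - 1) r) := by
    intro r hr
    have hrm : r ≤ m := Nat.lt_succ_iff.mp (mem_range.mp hr)
    have hbase : c - -(P : ℂ) - (c + P + m - N - 1) = ((N - r : ℕ) : ℂ) - (m - r : ℕ) + 1 := by
      push_cast [Nat.cast_sub hrm, Nat.cast_sub (hrm.trans hmN)]
      ring
    have hfact : (m.choose r : ℂ) * r ! * (m - r)! = m ! := by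
      exact_mod_cast Nat.choose_mul_factorial_mul_factorial hrm
    rw [saalschutzTerm, poch_neg_natCast, hbase, poch_natCast_sub_add_one, ← hfact]
    ring
  have hright : c - (c + P + m - N - 1) = ((N - P : ℕ) : ℂ) - m + 1 := by
    push_cast [Nat.cast_sub hPN]
    ring
  apply mul_left_cancel₀ (Nat.cast_ne_zero.mpr (factorial_ne_zero m) : (m ! : ℂ) ≠ 0)
  rw [mul_sum, ← sum_congr rfl hterm, saalschutz _ _ _ hc, sub_neg_eq_add, hright,
    poch_natCast_sub_add_one]
  ring

lemma saalschutzTerm_summand_split (L a b c : ℂ) {n p k s r : ℕ} (hrk : r ≤ k - s) :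
    (-1) ^ (s + r) * p.choose (s + r) * (n - (s + r)).choose (k - (s + r)) *
        poch (c + (s + r : ℕ)) (k - (s + r)) * poch (L + (s + r : ℕ)) (k - (s + r)) *
        saalschutzTerm a b L (s + r) s
      = ((-1) ^ s * p.choose s * poch a s * poch b s * poch (L + s) (k - s)) *
        ((-1) ^ r * (p - s).choose r * (n - s - r).choose (k - s - r) *
          poch (c + s + r) (k - s - r) * poch (L - a - b) r) := by
  have hchoose : (p.choose (s + r) : ℂ) * (s + r).choose s = p.choose s * (p - s).choose r := by
    have h := Nat.choose_mul (n := p) (Nat.le_add_right s r)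
    rw [Nat.add_sub_cancel_left] at h
    exact_mod_cast h
  have hshift : poch (L + s) (k - s) = poch (L + s) r * poch (L + (s + r : ℕ)) (k - s - r) := by
    rw [← Nat.add_sub_cancel' hrk, poch_add, Nat.add_sub_cancel_left]
    push_cast
    ring_nf
  rw [hshift, saalschutzTerm, Nat.add_sub_cancel_left, Nat.sub_sub, Nat.sub_sub,
    show c + s + r = c + (s + r : ℕ) by push_cast; ring, pow_add]
  linear_combination ((-1) ^ s * (-1) ^ r * (n - (s + r)).choose (k - (s + r)) *
    poch (c + (s + r : ℕ)) (k - (s + r)) * poch (L + (s + r : ℕ)) (k - (s + r)) *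
    poch a s * poch b s * poch (L + s) r * poch (L - a - b) r) * hchoose

theorem balanced_sum_transform (L a b c : ℂ) {n p k : ℕ} (hp : p ≤ n) (hk : k ≤ n)
    (hbal : L - a - b = c + p + k - n - 1) (hL : poch L k ≠ 0) (hc : poch c k ≠ 0) :
    ∑ j ∈ range (k + 1), (-1) ^ j * p.choose j * (n - j).choose (k - j) *
        poch (L - a) j * poch (L - b) j * poch (c + j) (k - j) * poch (L + j) (k - j)
      = ∑ i ∈ range (k + 1), (-1) ^ i * p.choose i * (n - p).choose (k - i) *
        poch a i * poch b i * poch (c + p) (k - i) * poch (L + i) (k - i) := by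
  set X : ℕ → ℕ → ℂ := fun j s => (-1) ^ j * p.choose j * (n - j).choose (k - j) *
    poch (c + j) (k - j) * poch (L + j) (k - j) * saalschutzTerm a b L j s with hX
  have hexpand : ∀ j ∈ range (k + 1), (-1) ^ j * p.choose j * (n - j).choose (k - j) *
      poch (L - a) j * poch (L - b) j * poch (c + j) (k - j) * poch (L + j) (k - j)
        = ∑ s ∈ range (j + 1), X (s + (j - s)) s := by
    intro j hj
    have hjk := Nat.lt_succ_iff.mp (mem_range.mp hj)
    obtain ⟨hLj, -⟩ := poch_add_ne_zero_iff.mp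
      (by rwa [Nat.add_sub_cancel' hjk] : poch L (j + (k - j)) ≠ 0)
    rw [sum_congr rfl fun s hs => by
      rw [Nat.add_sub_cancel' (Nat.lt_succ_iff.mp (mem_range.mp hs))], hX, ← mul_sum,
      saalschutz a b L hLj]
    ring
  rw [sum_congr rfl hexpand, sum_range_diag_flip (k + 1) fun s r => X (s + r) s]
  refine sum_congr rfl fun s hs => ?_
  have hsk : s ≤ k := Nat.lt_succ_iff.mp (mem_range.mp hs)
  rcases le_or_gt s p with hsp | hps
  swap
  · rw [sum_eq_zero fun r _ => by
        simp [hX, Nat.choose_eq_zero_of_lt (hps.trans_le (Nat.le_add_right s r))],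
      Nat.choose_eq_zero_of_lt hps]
    simp
  have hcs : poch (c + s) (k - s) ≠ 0 :=
    (poch_add_ne_zero_iff.mp (by rwa [Nat.add_sub_cancel' hsk])).2
  have hbal' : L - a - b = c + s + (p - s : ℕ) + (k - s : ℕ) - (n - s : ℕ) - 1 := by
    push_cast [Nat.cast_sub hsp, Nat.cast_sub hsk, Nat.cast_sub (hsk.trans hk)]
    rw [hbal]
    ring
  rw [Nat.sub_add_comm hsk, sum_congr rfl fun r hr => saalschutzTerm_summand_split L a b c
      (Nat.lt_succ_iff.mp (mem_range.mp hr)), ← mul_sum, hbal',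
    saalschutz_choose (c + s) (Nat.sub_le_sub_right hp s) (Nat.sub_le_sub_right hk s) hcs,
    Nat.sub_sub_sub_cancel_right hsp,
    show c + s + (p - s : ℕ) = c + p by push_cast [Nat.cast_sub hsp]; ring]
  ring

theorem sum_range_mul_sum_range {R : Type*} [CommSemiring R] (f g : ℕ → R) {N M : ℕ}
    (hf : ∀ i, N < i → f i = 0) (hg : ∀ j, M < j → g j = 0) (t : R) :
    (∑ i ∈ range (N + 1), f i * t ^ i) * ∑ j ∈ range (M + 1), g j * t ^ j
      = ∑ k ∈ range (N + M + 1), (∑ i ∈ range (k + 1), f i * g (k - i)) * t ^ k := by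
  have hextend : ∀ (h : ℕ → R) (B : ℕ), (∀ j, B < j → h j = 0) → ∀ A, B + 1 ≤ A →
      ∑ j ∈ range A, h j * t ^ j = ∑ j ∈ range (B + 1), h j * t ^ j := by
    intro h B hh A hA
    refine (sum_subset (range_subset_range.mpr hA) fun j _ hj => ?_).symm
    rw [hh j (by simpa using hj), zero_mul]
  calc _ = ∑ i ∈ range (N + M + 1), f i * t ^ i * ∑ j ∈ range (M + 1), g j * t ^ j := by
        rw [← sum_mul, hextend f N hf (N + M + 1) (by omega)]
    _ = ∑ i ∈ range (N + M + 1), f i * t ^ i * ∑ j ∈ range (N + M + 1 - i), g j * t ^ j := by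
        refine sum_congr rfl fun i _ => ?_
        rcases le_or_gt i N with hi | hi
        · rw [hextend g M hg (N + M + 1 - i) (by omega)]
        · rw [hf i hi, zero_mul, zero_mul, zero_mul]
    _ = _ := by
        simp_rw [mul_sum, ← sum_range_diag_flip, sum_mul]
        refine sum_congr rfl fun k _ => sum_congr rfl fun i hi => ?_
        rw [← pow_mul_pow_sub t (Nat.lt_succ_iff.mp (mem_range.mp hi))]
        ring

noncomputable def f21Coeff (m : ℕ) (b c : ℂ) (j : ℕ) : ℂ :=
  poch (-(m : ℂ)) j * poch b j / (poch c j * (j.factorial : ℂ))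

lemma f21Coeff_eq_zero {m j : ℕ} (h : m < j) (b c : ℂ) : f21Coeff m b c j = 0 := by
  simp [f21Coeff, poch_neg_natCast, Nat.choose_eq_zero_of_lt h]

lemma F21_mul_F21 (N M : ℕ) (b c b' c' t : ℂ) :
    F21 N b c t * F21 M b' c' t = ∑ k ∈ range (N + M + 1),
      (∑ i ∈ range (k + 1), f21Coeff N b c i * f21Coeff M b' c' (k - i)) * t ^ k :=
  sum_range_mul_sum_range _ _ (fun _ h => f21Coeff_eq_zero h b c)
    (fun _ h => f21Coeff_eq_zero h b' c') t

section Coefficients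

variable (l1 l2 l3 : ℂ) {n p k : ℕ}

theorem racah_eq_sum_range :
    Racah l1 l2 l3 n p k = ∑ j ∈ range (k + 1),
      poch (-(p : ℂ)) j * poch ((p : ℂ) + l2 + l3 - 1) j * poch (-(k : ℂ)) j *
          poch ((k : ℂ) + l1 + l2 - 1) j /
        (poch l2 j * poch (l1 + l2 + l3 + (n : ℂ) - 1) j * poch (-(n : ℂ)) j *
          (j.factorial : ℂ)) := by
  refine sum_subset (range_subset_range.mpr (by omega)) fun j hj hjp => ?_
  have hpj : p < j := by simp only [mem_range] at hj hjp; omega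
  simp [poch_neg_natCast, Nat.choose_eq_zero_of_lt hpj]

theorem poch_mul_racah_eq_sum (hk : k ≤ n) (hL : poch (l1 + l2 + l3 + n - 1) k ≠ 0)
    (h2 : poch l2 k ≠ 0) :
    poch (l1 + l2 + l3 + n - 1) k * (n.choose k * poch l2 k * Racah l1 l2 l3 n p k)
      = ∑ j ∈ range (k + 1), (-1) ^ j * p.choose j * (n - j).choose (k - j) *
        poch ((p : ℂ) + l2 + l3 - 1) j * poch ((k : ℂ) + l1 + l2 - 1) j *
        poch (l2 + j) (k - j) * poch (l1 + l2 + l3 + n - 1 + j) (k - j) := by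
  rw [racah_eq_sum_range, mul_sum, mul_sum]
  refine sum_congr rfl fun j hj => ?_
  have hjk : j ≤ k := Nat.lt_succ_iff.mp (mem_range.mp hj)
  have hsplit : ∀ x, poch x k = poch x j * poch (x + j) (k - j) := fun x => by
    rw [← poch_add, Nat.add_sub_cancel' hjk]
  rw [hsplit] at hL h2
  rw [hsplit, hsplit]
  have hbinom : (n.choose k : ℂ) * k.choose j = n.choose j * (n - j).choose (k - j) := by
    exact_mod_cast Nat.choose_mul hjk
  have hnj : (n.choose j : ℂ) ≠ 0 := Nat.cast_ne_zero.mpr (Nat.choose_pos (hjk.trans hk)).ne'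
  have hfj : (j ! : ℂ) ≠ 0 := Nat.cast_ne_zero.mpr (factorial_ne_zero j)
  simp only [poch_neg_natCast]
  field_simp [left_ne_zero_of_mul hL, left_ne_zero_of_mul h2]
  linear_combination (p.choose j : ℂ) * poch ((p : ℂ) + l2 + l3 - 1) j *
    poch ((k : ℂ) + l1 + l2 - 1) j * poch (l2 + j) (k - j) *
    poch (l1 + l2 + l3 + n - 1 + j) (k - j) * hbinom

theorem poch_mul_f21Coeff_convolution_eq_sum (hk : k ≤ n) (hL : poch (l1 + l2 + l3 + n - 1) k ≠ 0)
    (h3 : poch (-l3 - n + 1) k ≠ 0) :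
    poch (l1 + l2 + l3 + n - 1) k * (poch l3 n * ∑ i ∈ range (k + 1),
        f21Coeff p (l1 + n - p) (l1 + l2 + l3 + n - 1) i *
          f21Coeff (n - p) (p + l2) (-l3 - n + 1) (k - i))
      = poch l3 (n - k) * ∑ i ∈ range (k + 1), (-1) ^ i * p.choose i * (n - p).choose (k - i) *
        poch (l1 + n - p) i * poch (l3 + n - k) i * poch (l2 + p) (k - i) *
        poch (l1 + l2 + l3 + n - 1 + i) (k - i) := by
  rw [mul_sum, mul_sum, mul_sum]
  refine sum_congr rfl fun i hi => ?_
  have hik : i ≤ k := Nat.lt_succ_iff.mp (mem_range.mp hi)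
  have hL' : poch (l1 + l2 + l3 + n - 1) k
      = poch (l1 + l2 + l3 + n - 1) i * poch (l1 + l2 + l3 + n - 1 + i) (k - i) := by
    rw [← poch_add, Nat.add_sub_cancel' hik]
  have hl3 : poch l3 n
      = poch l3 (n - k) * poch (l3 + n - k) i * poch (l3 + n - (k - i : ℕ)) (k - i) := by
    conv_lhs => rw [show n = n - k + i + (k - i) by omega, poch_add, poch_add]
    push_cast [Nat.cast_sub hk, Nat.cast_sub hik]
    ring_nf
  have hc : poch (-l3 - n + 1) (k - i) = (-1) ^ (k - i) * poch (l3 + n - (k - i : ℕ)) (k - i) := by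
    rw [show -l3 - n + 1 = 1 - (l3 + n) by ring, poch_one_sub]
  rw [hL'] at hL
  rw [← Nat.sub_add_cancel hik, poch_add, hc] at h3
  rw [hL', hl3, f21Coeff, f21Coeff, hc, poch_neg_natCast, poch_neg_natCast, add_comm (p : ℂ) l2]
  have hP := right_ne_zero_of_mul (left_ne_zero_of_mul h3)
  have hfi : (i ! : ℂ) ≠ 0 := Nat.cast_ne_zero.mpr (factorial_ne_zero i)
  have hfj : ((k - i)! : ℂ) ≠ 0 := Nat.cast_ne_zero.mpr (factorial_ne_zero (k - i))
  field_simp [left_ne_zero_of_mul hL]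

theorem choose_mul_poch_mul_racah_eq_convolution (hp : p ≤ n) (hk : k ≤ n)
    (hL : poch (l1 + l2 + l3 + n - 1) k ≠ 0) (h2 : poch l2 k ≠ 0)
    (h3 : poch (-l3 - n + 1) k ≠ 0) :
    n.choose k * poch l2 k * poch l3 (n - k) * Racah l1 l2 l3 n p k
      = poch l3 n * ∑ i ∈ range (k + 1), f21Coeff p (l1 + n - p) (l1 + l2 + l3 + n - 1) i *
          f21Coeff (n - p) (p + l2) (-l3 - n + 1) (k - i) := by
  apply mul_left_cancel₀ hL
  have hB := balanced_sum_transform (l1 + l2 + l3 + n - 1) (l1 + n - p) (l3 + n - k) l2 hp hk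
    (by ring) hL h2
  rw [show l1 + l2 + l3 + n - 1 - (l1 + n - p) = p + l2 + l3 - 1 by ring,
    show l1 + l2 + l3 + n - 1 - (l3 + n - k) = k + l1 + l2 - 1 by ring] at hB
  rw [poch_mul_f21Coeff_convolution_eq_sum l1 l2 l3 hk hL h3, ← hB,
    ← poch_mul_racah_eq_sum l1 l2 l3 hk hL h2]
  ring

end Coefficients

theorem ucoef_generating_function (l1 l2 l3 : ℝ) (h1 : 0 < l1) (h2 : 0 < l2) (h3 : 0 < l3)
    (n p : ℕ) (hp : p ≤ n) (t : ℂ) :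
    ∑ k ∈ Finset.range (n + 1), Ucoef (l1 : ℂ) (l2 : ℂ) (l3 : ℂ) n p k * t ^ k
      = poch (l3 : ℂ) n * poch ((l1 : ℂ) + l2 + l3 + n - 1) p /
          (poch (l3 : ℂ) p * poch ((l2 : ℂ) + l3 + p - 1) p *
            poch ((l2 : ℂ) + l3 + 2 * p) (n - p)) *
        F21 p ((l1 : ℂ) + n - p) ((l1 : ℂ) + l2 + l3 + n - 1) t *
        F21 (n - p) ((p : ℂ) + l2) (-(l3 : ℂ) - n + 1) t := by
  have hL : ∀ k ≤ n, poch ((l1 : ℂ) + l2 + l3 + n - 1) k ≠ 0 := fun k hk => by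
    exact_mod_cast poch_ofReal_ne_zero (x := l1 + l2 + l3 + n - 1) fun j hj =>
      (by linarith [(by exact_mod_cast hj.trans_le hk : (j : ℝ) + 1 ≤ n)] :
        0 < l1 + l2 + l3 + n - 1 + j).ne'
  have hl2 : ∀ k, poch (l2 : ℂ) k ≠ 0 := fun k =>
    poch_ofReal_ne_zero fun j _ => (by positivity : 0 < l2 + j).ne'
  have hl3 : ∀ k ≤ n, poch (-(l3 : ℂ) - n + 1) k ≠ 0 := fun k hk => by
    exact_mod_cast poch_ofReal_ne_zero (x := -l3 - n + 1) fun j hj =>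
      (by linarith [(by exact_mod_cast hj.trans_le hk : (j : ℝ) + 1 ≤ n)] :
        -l3 - n + 1 + j < 0).ne
  rw [mul_assoc _ (F21 _ _ _ _), F21_mul_F21, Nat.add_sub_cancel' hp, mul_sum]
  refine sum_congr rfl fun k hk => ?_
  have hkn : k ≤ n := Nat.lt_succ_iff.mp (mem_range.mp hk)
  rw [Ucoef]
  linear_combination poch ((l1 : ℂ) + l2 + l3 + n - 1) p / (poch (l3 : ℂ) p *
      poch ((l2 : ℂ) + l3 + p - 1) p * poch ((l2 : ℂ) + l3 + 2 * p) (n - p)) * t ^ k *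
    choose_mul_poch_mul_racah_eq_convolution _ _ _ hp hkn (hL k hkn) (hl2 k) (hl3 k hkn)
end
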